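/- Let f_1, …, f_K : ℝ^d → ℝ each be convex and differentiable with L-Lipschitz gradient, let f := (1/K) Σ_{k=1}^K f_k, and fix x⋆ ∈ ℝ^d. Fix x ∈ ℝ^d and table points x̃(1), …, x̃(K) ∈ ℝ^d, and define φ := (1/K) Σ_{k=1}^K ‖∇f_k(x̃(k)) − ∇f_k(x⋆)‖². Then the second moment of the SAGA estimator under uniform sampling of k satisfies (1/K) Σ_{k=1}^K ‖∇f_k(x) − ∇f_k(x̃(k)) + (1/K) Σ_{j=1}^K ∇f_j(x̃(j)) − ∇f(x⋆)‖² ≤ 4L · D_f(x, x⋆) + 2φ, where D_f(x, y) := f(x) − f(y) − ⟨∇f(y), x − y⟩ is the Bregman divergence of f. -/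

import Mathlib

open scoped RealInnerProductSpace BigOperators

section aux

variable {F : Type*} [NormedAddCommGroup F] [InnerProductSpace ℝ F] [CompleteSpace F]

lemma line_hasDerivAt (g : F → ℝ) (hg : Differentiable ℝ g) (y v : F) (t : ℝ) :
    HasDerivAt (fun s : ℝ => g (y + s • v)) ⟪gradient g (y + t • v), v⟫ t := by
  have h1 : HasDerivAt (fun s : ℝ => y + s • v) v t := by
    simpa using ((hasDerivAt_id t).smul_const v).const_add y
  have h2 := (hg (y + t • v)).hasGradientAt.hasFDerivAt
  have h3 := h2.comp_hasDerivAt t h1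
  simp only [InnerProductSpace.toDual_apply_apply] at h3
  exact h3

lemma grad_inner_le_sub (g : F → ℝ) (hconv : ConvexOn ℝ Set.univ g)
    (hg : Differentiable ℝ g) (x y : F) :
    ⟪gradient g y, x - y⟫ ≤ g x - g y := by
  have hconvh : ConvexOn ℝ Set.univ (fun t : ℝ => g (y + t • (x - y))) := by
    have h0 := hconv.comp_affineMap (AffineMap.lineMap y x : ℝ →ᵃ[ℝ] F)
    have he : ((fun z => g z) ∘ ⇑(AffineMap.lineMap y x : ℝ →ᵃ[ℝ] F))
        = fun t : ℝ => g (y + t • (x - y)) := by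
      funext t
      simp only [Function.comp, AffineMap.lineMap_apply_module]
      congr 1
      module
    rw [he] at h0
    simpa using h0
  have hd0 : HasDerivAt (fun t : ℝ => g (y + t • (x - y))) ⟪gradient g y, x - y⟫ 0 := by
    have := line_hasDerivAt g hg y (x - y) 0
    simpa using this
  have := hconvh.le_slope_of_hasDerivAt (Set.mem_univ (0:ℝ)) (Set.mem_univ (1:ℝ)) one_pos hd0
  simpa [slope_def_field] using this

lemma descent_lemma (g : F → ℝ) (hg : Differentiable ℝ g) (L : ℝ) (hL : 0 < L)
    (hlip : ∀ a b, ‖gradient g a - gradient g b‖ ≤ L * ‖a - b‖) (y z : F) :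
    g z ≤ g y + ⟪gradient g y, z - y⟫ + L / 2 * ‖z - y‖ ^ 2 := by
  set v := z - y with hv
  set ψ : ℝ → ℝ := fun t => g (y + t • v) - t * ⟪gradient g y, v⟫ - L * t ^ 2 / 2 * ‖v‖ ^ 2
    with hψ
  have hder : ∀ t : ℝ, HasDerivAt ψ
      (⟪gradient g (y + t • v), v⟫ - ⟪gradient g y, v⟫ - L * t * ‖v‖ ^ 2) t := by
    intro t
    have h1 := line_hasDerivAt g hg y v t
    have h2 : HasDerivAt (fun t : ℝ => t * ⟪gradient g y, v⟫) ⟪gradient g y, v⟫ t := by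
      simpa using (hasDerivAt_id t).mul_const ⟪gradient g y, v⟫
    have h3 : HasDerivAt (fun t : ℝ => L * t ^ 2 / 2 * ‖v‖ ^ 2) (L * t * ‖v‖ ^ 2) t := by
      have : HasDerivAt (fun t : ℝ => t ^ 2) (2 * t) t := by
        simpa using hasDerivAt_pow 2 t
      have := ((this.const_mul L).div_const 2).mul_const (‖v‖ ^ 2)
      rw [show L * (2 * t) / 2 * ‖v‖ ^ 2 = L * t * ‖v‖ ^ 2 by ring] at this
      exact this
    exact (h1.sub h2).sub h3
  have hanti : AntitoneOn ψ (Set.Icc (0:ℝ) 1) := by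
    apply antitoneOn_of_deriv_nonpos (convex_Icc 0 1)
    · exact fun t _ => ((hder t).continuousAt).continuousWithinAt
    · intro t _
      exact ((hder t).differentiableAt).differentiableWithinAt
    · intro t ht
      rw [interior_Icc] at ht
      rw [(hder t).deriv]
      have hb : ⟪gradient g (y + t • v) - gradient g y, v⟫ ≤ L * t * ‖v‖ ^ 2 := by
        calc ⟪gradient g (y + t • v) - gradient g y, v⟫
            ≤ ‖gradient g (y + t • v) - gradient g y‖ * ‖v‖ := real_inner_le_norm _ _
          _ ≤ (L * ‖(y + t • v) - y‖) * ‖v‖ := by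
              have := hlip (y + t • v) y
              nlinarith [norm_nonneg v]
          _ = L * t * ‖v‖ ^ 2 := by
              rw [add_sub_cancel_left, norm_smul]
              simp [abs_of_pos ht.1]
              ring
      rw [inner_sub_left] at hb
      linarith
  have h01 := hanti (Set.left_mem_Icc.2 zero_le_one) (Set.right_mem_Icc.2 zero_le_one) zero_le_one
  have hψ0 : ψ 0 = g y := by simp [hψ]
  have hψ1 : ψ 1 = g z - ⟪gradient g y, v⟫ - L / 2 * ‖v‖ ^ 2 := by
    simp only [hψ, one_smul, one_pow, mul_one, hv, add_sub_cancel]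
    ring_nf
  rw [hψ0, hψ1] at h01
  linarith

lemma cocoercivity (g : F → ℝ) (hconv : ConvexOn ℝ Set.univ g)
    (hg : Differentiable ℝ g) (L : ℝ) (hL : 0 < L)
    (hlip : ∀ a b, ‖gradient g a - gradient g b‖ ≤ L * ‖a - b‖) (x y : F) :
    ‖gradient g x - gradient g y‖ ^ 2 ≤ 2 * L * (g x - g y - ⟪gradient g y, x - y⟫) := by
  set w := gradient g x - gradient g y with hw
  set z := x - L⁻¹ • w with hz
  have hdesc := descent_lemma g hg L hL hlip x z
  have hlow := grad_inner_le_sub g hconv hg z y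
  have hzx : z - x = -(L⁻¹ • w) := by rw [hz]; abel
  have h1 : ⟪gradient g x, z - x⟫ = -(L⁻¹ * ⟪gradient g x, w⟫) := by
    rw [hzx, inner_neg_right, real_inner_smul_right]
  have h2 : ‖z - x‖ ^ 2 = L⁻¹ ^ 2 * ‖w‖ ^ 2 := by
    rw [hzx, norm_neg, norm_smul, mul_pow, Real.norm_eq_abs, abs_of_pos (inv_pos.2 hL)]
  have h3 : ⟪gradient g y, z - y⟫ = ⟪gradient g y, x - y⟫ - L⁻¹ * ⟪gradient g y, w⟫ := by
    have : z - y = (x - y) - L⁻¹ • w := by rw [hz]; abel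
    rw [this, inner_sub_right, real_inner_smul_right]
  have h4 : ⟪gradient g x, w⟫ - ⟪gradient g y, w⟫ = ‖w‖ ^ 2 := by
    rw [← inner_sub_left, ← hw, real_inner_self_eq_norm_sq]
  have hL' : (0:ℝ) < L⁻¹ := inv_pos.2 hL
  rw [h1, h2] at hdesc
  rw [h3] at hlow
  have key : L⁻¹ * ‖w‖ ^ 2 - L / 2 * (L⁻¹ ^ 2 * ‖w‖ ^ 2) ≤ g x - g y - ⟪gradient g y, x - y⟫ := by
    nlinarith
  have hfin : L⁻¹ * ‖w‖ ^ 2 - L / 2 * (L⁻¹ ^ 2 * ‖w‖ ^ 2) = ‖w‖ ^ 2 / (2 * L) := by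
    field_simp
    ring
  rw [hfin] at key
  rw [div_le_iff₀ (by positivity)] at key
  linarith [key]

end aux

/-- Bregman divergence of a differentiable function `f` on `ℝ^d`. -/
noncomputable def bregman {d : ℕ} (f : EuclideanSpace ℝ (Fin d) → ℝ)
    (x y : EuclideanSpace ℝ (Fin d)) : ℝ :=
  f x - f y - ⟪gradient f y, x - y⟫

theorem saga_second_moment_bound {d K : ℕ} (hK : 0 < K)
    (fk : Fin K → EuclideanSpace ℝ (Fin d) → ℝ) (L : ℝ) (hL : 0 < L)
    (hconv : ∀ k, ConvexOn ℝ Set.univ (fk k))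
    (hdiff : ∀ k, Differentiable ℝ (fk k))
    (hlip : ∀ k, ∀ x y, ‖gradient (fk k) x - gradient (fk k) y‖ ≤ L * ‖x - y‖)
    (f : EuclideanSpace ℝ (Fin d) → ℝ)
    (hf : f = fun x => (1 / (K : ℝ)) * ∑ k : Fin K, fk k x)
    (xstar x : EuclideanSpace ℝ (Fin d)) (xt : Fin K → EuclideanSpace ℝ (Fin d))
    (φ : ℝ)
    (hφ : φ = (1 / (K : ℝ)) *
        ∑ k : Fin K, ‖gradient (fk k) (xt k) - gradient (fk k) xstar‖ ^ 2) :
    (1 / (K : ℝ)) * ∑ k : Fin K,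
        ‖gradient (fk k) x - gradient (fk k) (xt k)
            + (1 / (K : ℝ)) • ∑ j : Fin K, gradient (fk j) (xt j)
            - gradient f xstar‖ ^ 2
      ≤ 4 * L * bregman f x xstar + 2 * φ := by
  have hκ : (0:ℝ) < (K:ℝ) := by exact_mod_cast hK
  -- gradient of f
  have hgradf : ∀ y, HasGradientAt f ((1/(K:ℝ)) • ∑ k, gradient (fk k) y) y := by
    intro y
    have hF : HasFDerivAt f ((1/(K:ℝ)) • ∑ k : Fin K, fderiv ℝ (fk k) y) y := by
      rw [hf]
      exact HasFDerivAt.const_mul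
        (HasFDerivAt.fun_sum (fun k _ => ((hdiff k) y).hasFDerivAt)) (1/(K:ℝ))
    have key : (InnerProductSpace.toDual ℝ (EuclideanSpace ℝ (Fin d)))
        ((1/(K:ℝ)) • ∑ k : Fin K, gradient (fk k) y)
        = (1/(K:ℝ)) • ∑ k : Fin K, fderiv ℝ (fk k) y := by
      rw [map_smul, map_sum]
      congr 1
      refine Finset.sum_congr rfl (fun k _ => ?_)
      exact (InnerProductSpace.toDual ℝ _).apply_symm_apply _
    rw [hasGradientAt_iff_hasFDerivAt, key]
    exact hF
  have hGstar : gradient f xstar = (1/(K:ℝ)) • ∑ k : Fin K, gradient (fk k) xstar :=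
    (hgradf xstar).gradient
  -- bregman of f as average
  set Dk : Fin K → ℝ :=
    fun k => fk k x - fk k xstar - ⟪gradient (fk k) xstar, x - xstar⟫ with hDk
  have hbreg : bregman f x xstar = (1/(K:ℝ)) * ∑ k, Dk k := by
    rw [bregman, hGstar, hf]
    simp only [real_inner_smul_left, sum_inner, hDk]
    rw [Finset.sum_sub_distrib, Finset.sum_sub_distrib]
    ring
  -- notation
  set a : Fin K → EuclideanSpace ℝ (Fin d) :=
    fun k => gradient (fk k) x - gradient (fk k) xstar with ha
  set c : Fin K → EuclideanSpace ℝ (Fin d) :=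
    fun k => gradient (fk k) (xt k) - gradient (fk k) xstar with hc
  set C : EuclideanSpace ℝ (Fin d) := ∑ k, c k with hC
  set m : EuclideanSpace ℝ (Fin d) := (1/(K:ℝ)) • C with hm
  have hexpr : ∀ k, gradient (fk k) x - gradient (fk k) (xt k)
      + (1/(K:ℝ)) • ∑ j : Fin K, gradient (fk j) (xt j) - gradient f xstar
      = a k + (m - c k) := by
    intro k
    have hm2 : m = (1/(K:ℝ)) • (∑ j : Fin K, gradient (fk j) (xt j))
        - (1/(K:ℝ)) • (∑ j : Fin K, gradient (fk j) xstar) := by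
      rw [hm, hC]
      simp only [hc, Finset.sum_sub_distrib, smul_sub]
    rw [hGstar, ha, hc, hm2]
    module
  have hterm : ∀ k, ‖a k + (m - c k)‖ ^ 2 ≤ 2 * ‖a k‖ ^ 2 + 2 * ‖c k - m‖ ^ 2 := by
    intro k
    have h1 : ‖a k + (m - c k)‖ ≤ ‖a k‖ + ‖c k - m‖ := by
      calc ‖a k + (m - c k)‖ ≤ ‖a k‖ + ‖m - c k‖ := norm_add_le _ _
        _ = ‖a k‖ + ‖c k - m‖ := by rw [norm_sub_rev m (c k)]
    nlinarith [norm_nonneg (a k + (m - c k)), norm_nonneg (a k), norm_nonneg (c k - m),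
      sq_nonneg (‖a k‖ - ‖c k - m‖)]
  have hcoco : ∀ k, ‖a k‖ ^ 2 ≤ 2 * L * Dk k := by
    intro k
    exact cocoercivity (fk k) (hconv k) (hdiff k) L hL (hlip k) x xstar
  have hvar : ∑ k, ‖c k - m‖ ^ 2 ≤ ∑ k, ‖c k‖ ^ 2 := by
    have expand : ∀ k : Fin K, ‖c k - m‖ ^ 2 = ‖c k‖ ^ 2 - 2 * ⟪c k, m⟫ + ‖m‖ ^ 2 := by
      intro k
      rw [← real_inner_self_eq_norm_sq, ← real_inner_self_eq_norm_sq,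
        ← real_inner_self_eq_norm_sq, inner_sub_sub_self, real_inner_comm m (c k)]
      ring
    rw [Finset.sum_congr rfl (fun k _ => expand k), Finset.sum_add_distrib,
      Finset.sum_sub_distrib, ← Finset.mul_sum]
    have hsuminner : ∑ k, ⟪c k, m⟫ = (1/(K:ℝ)) * ‖C‖ ^ 2 := by
      rw [← sum_inner, ← hC, hm, real_inner_smul_right, real_inner_self_eq_norm_sq]
    have hmnorm : ‖m‖ ^ 2 = (1/(K:ℝ)) ^ 2 * ‖C‖ ^ 2 := by
      rw [hm, norm_smul, mul_pow, Real.norm_eq_abs, abs_of_pos (by positivity : (0:ℝ) < 1/(K:ℝ))]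
    rw [hsuminner]
    simp only [Finset.sum_const, Finset.card_univ, Fintype.card_fin, nsmul_eq_mul, hmnorm]
    have : (K:ℝ) * ((1/(K:ℝ))^2 * ‖C‖^2) = (1/(K:ℝ)) * ‖C‖^2 := by
      field_simp
    rw [this]
    have h0 : (0:ℝ) ≤ (1/(K:ℝ)) * ‖C‖^2 := by positivity
    linarith
  -- assemble
  calc (1 / (K : ℝ)) * ∑ k : Fin K,
        ‖gradient (fk k) x - gradient (fk k) (xt k)
            + (1 / (K : ℝ)) • ∑ j : Fin K, gradient (fk j) (xt j)
            - gradient f xstar‖ ^ 2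
      = (1/(K:ℝ)) * ∑ k, ‖a k + (m - c k)‖ ^ 2 := by
        rw [Finset.sum_congr rfl (fun k _ => by rw [hexpr k])]
    _ ≤ (1/(K:ℝ)) * ∑ k, (2 * ‖a k‖ ^ 2 + 2 * ‖c k - m‖ ^ 2) := by
        apply mul_le_mul_of_nonneg_left (Finset.sum_le_sum (fun k _ => hterm k)) (by positivity)
    _ = (2/(K:ℝ)) * ∑ k, ‖a k‖ ^ 2 + (2/(K:ℝ)) * ∑ k, ‖c k - m‖ ^ 2 := by
        rw [Finset.sum_add_distrib, ← Finset.mul_sum, ← Finset.mul_sum]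
        ring
    _ ≤ (2/(K:ℝ)) * ∑ k, (2 * L * Dk k) + (2/(K:ℝ)) * ∑ k, ‖c k‖ ^ 2 := by
        have h1 := Finset.sum_le_sum (fun k (_ : k ∈ Finset.univ) => hcoco k)
        have h2 : (0:ℝ) ≤ 2/(K:ℝ) := by positivity
        exact add_le_add (mul_le_mul_of_nonneg_left h1 h2)
          (mul_le_mul_of_nonneg_left hvar h2)
    _ = 4 * L * bregman f x xstar + 2 * φ := by
        rw [hbreg, hφ, ← Finset.mul_sum]
        ring
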